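/- arXiv:math/0608163 — 10 statements merged into one kernel-verified Lean document; each statement's English description precedes it below -/
import Mathlib

section
/- Let C be a small category, I a small filtered category, F : I ⥤ C a functor, P the colimit of F ⋙ y in Pre(C) with cocone components ι_i : y(F i) ⟶ P. Let Y be an object of C, f : P ⟶ y(Y) a morphism of presheaves with components f_i : F i ⟶ Y (i.e. f ∘ ι_i = y(f_i)), and g : Y ⟶ F i₀ a morphism in C such that f_{i₀} ∘ g = 𝟙_Y. Assume that for every object i of I there is a morphism τ_i : i ⟶ j in I such that for every object V of C and every pair of morphisms h₁, h₂ : V ⟶ F i in C, if f_i ∘ h₁ = f_i ∘ h₂ then F(τ_i) ∘ h₁ = F(τ_i) ∘ h₂. Then f is an isomorphism of presheaves, with inverse ι_{i₀} ∘ y(g). -/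
open CategoryTheory CategoryTheory.Limits

universe u

theorem ind_iso_criterion {C : Type u} [SmallCategory C]
    {I : Type u} [SmallCategory I] [IsFiltered I] (F : I ⥤ C) (Y : C)
    (f : colimit (F ⋙ yoneda) ⟶ yoneda.obj Y)
    (fc : ∀ i : I, F.obj i ⟶ Y)
    (hf : ∀ i : I, colimit.ι (F ⋙ yoneda) i ≫ f = yoneda.map (fc i))
    (i₀ : I) (g : Y ⟶ F.obj i₀) (hg : g ≫ fc i₀ = 𝟙 Y)
    (H : ∀ i : I, ∃ (j : I) (τ : i ⟶ j), ∀ (V : C) (h₁ h₂ : V ⟶ F.obj i),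
      h₁ ≫ fc i = h₂ ≫ fc i → h₁ ≫ F.map τ = h₂ ≫ F.map τ) :
    f ≫ (yoneda.map g ≫ colimit.ι (F ⋙ yoneda) i₀) = 𝟙 (colimit (F ⋙ yoneda)) ∧
      (yoneda.map g ≫ colimit.ι (F ⋙ yoneda) i₀) ≫ f = 𝟙 (yoneda.obj Y) ∧
      IsIso f := by
  have fc_nat : ∀ {a b : I} (φ : a ⟶ b), F.map φ ≫ fc b = fc a := by
    intro a b φ
    apply yoneda.map_injective
    rw [yoneda.map_comp, ← hf b, ← hf a, ← colimit.w (F ⋙ yoneda) φ, Category.assoc]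
    rfl
  have h1 : f ≫ (yoneda.map g ≫ colimit.ι (F ⋙ yoneda) i₀) = 𝟙 (colimit (F ⋙ yoneda)) := by
    apply colimit.hom_ext
    intro i
    rw [Category.comp_id, ← Category.assoc, hf i]
    obtain ⟨j, τ, hτ⟩ := H (IsFiltered.max i i₀)
    have key : (fc i ≫ g ≫ F.map (IsFiltered.rightToMax i i₀)) ≫ F.map τ =
        F.map (IsFiltered.leftToMax i i₀) ≫ F.map τ := by
      apply hτ
      simp only [Category.assoc, fc_nat]
      rw [hg, Category.comp_id]
    calc yoneda.map (fc i) ≫ yoneda.map g ≫ colimit.ι (F ⋙ yoneda) i₀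
        = yoneda.map (fc i) ≫ yoneda.map g ≫
            ((F ⋙ yoneda).map (IsFiltered.rightToMax i i₀ ≫ τ) ≫ colimit.ι (F ⋙ yoneda) j) := by
          rw [colimit.w]
      _ = yoneda.map ((fc i ≫ g ≫ F.map (IsFiltered.rightToMax i i₀)) ≫ F.map τ) ≫
            colimit.ι (F ⋙ yoneda) j := by
          simp [Functor.comp_map]
      _ = (F ⋙ yoneda).map (IsFiltered.leftToMax i i₀ ≫ τ) ≫ colimit.ι (F ⋙ yoneda) j := by
          rw [key]; simp [Functor.comp_map]
      _ = colimit.ι (F ⋙ yoneda) i := by rw [colimit.w]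
  have h2 : (yoneda.map g ≫ colimit.ι (F ⋙ yoneda) i₀) ≫ f = 𝟙 (yoneda.obj Y) := by
    rw [Category.assoc, hf i₀, ← yoneda.map_comp, hg, yoneda.map_id]
  exact ⟨h1, h2, ⟨⟨_, h1, h2⟩⟩⟩
end

section
/- Let C be a small category with pullbacks, I a small filtered category, F : I ⥤ C a functor, P the colimit of F ⋙ y in Pre(C) with cocone components ι_i : y(F i) ⟶ P. Let Y be an object of C, f : P ⟶ y(Y) a morphism of presheaves with components f_i : F i ⟶ Y, and g : Y ⟶ F i₀ a morphism in C such that f_{i₀} ∘ g = 𝟙_Y. Assume that for every object i of I there is a morphism τ_i : i ⟶ j in I such that the canonical morphism F i ×_{F j} F i ⟶ F i ×_Y F i (from the kernel pair of F(τ_i) to the kernel pair of f_i, induced by the equality f_j ∘ F(τ_i) = f_i) is an isomorphism in C. Then f is an isomorphism of presheaves, with inverse ι_{i₀} ∘ y(g). -/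
/-!
Write `s = y(g) ≫ ι_{i₀}`; then `s ≫ f = y(g ≫ f_{i₀}) = 𝟙`. For `f ≫ s = 𝟙` it suffices that
`ι_i = y(f_i ≫ g) ≫ ι_{i₀}` for every `i`. With `k = max i i₀`, both sides are of the form `y(-) ≫ ι_k`,
applied to two maps `a, b : F i ⟶ F k` with `a ≫ f_k = b ≫ f_k = f_i`. The hypothesis at `k` says
that the kernel pair of `f_k` lies in that of some `F(τ) : F k ⟶ F l`, so `a ≫ F(τ) = b ≫ F(τ)`,
and then `y(a) ≫ ι_k = y(b) ≫ ι_k` because `ι_k = y(F τ) ≫ ι_l`.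
-/

open CategoryTheory CategoryTheory.Limits

universe u

lemma comp_eq_of_isIso_pullbackMap {C : Type*} [Category C] {X Y Z W : C}
    (t : X ⟶ Z) (p : X ⟶ Y) (q : Z ⟶ Y) (w : t ≫ q = 𝟙 X ≫ p) [HasPullback t t] [HasPullback p p]
    [IsIso (pullback.map t t p p (𝟙 X) (𝟙 X) q w w)] {a b : W ⟶ X} (h : a ≫ p = b ≫ p) :
    a ≫ t = b ≫ t := by
  have hfst : pullback.map t t p p (𝟙 X) (𝟙 X) q w w ≫ pullback.fst p p = pullback.fst t t :=
    (pullback.lift_fst _ _ _).trans (Category.comp_id _)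
  have hsnd : pullback.map t t p p (𝟙 X) (𝟙 X) q w w ≫ pullback.snd p p = pullback.snd t t :=
    (pullback.lift_snd _ _ _).trans (Category.comp_id _)
  let e := pullback.lift a b h ≫ inv (pullback.map t t p p (𝟙 X) (𝟙 X) q w w)
  have he_fst : e ≫ pullback.fst t t = a := by
    rw [← hfst, Category.assoc, IsIso.inv_hom_id_assoc, pullback.lift_fst]
  have he_snd : e ≫ pullback.snd t t = b := by
    rw [← hsnd, Category.assoc, IsIso.inv_hom_id_assoc, pullback.lift_snd]
  have := e ≫= pullback.condition (f := t) (g := t)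
  rwa [reassoc_of% he_fst, reassoc_of% he_snd] at this

section Colimit

variable {I C D : Type*} [Category I] [Category C] [Category D] (G : I ⥤ C) (E : C ⥤ D)
  [HasColimit (G ⋙ E)]

lemma map_comp_colimit_ι_eq_of_comp_map_eq {X : C} {k l : I} (τ : k ⟶ l) {a b : X ⟶ G.obj k}
    (h : a ≫ G.map τ = b ≫ G.map τ) :
    E.map a ≫ colimit.ι (G ⋙ E) k = E.map b ≫ colimit.ι (G ⋙ E) k := by
  rw [← colimit.w (G ⋙ E) τ, Functor.comp_map, ← E.map_comp_assoc, h, E.map_comp_assoc]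

lemma map_comp_eq_of_colimit_ι_comp_eq_map [E.Faithful] {Y : C} (f : colimit (G ⋙ E) ⟶ E.obj Y)
    (fc : ∀ i, G.obj i ⟶ Y) (hf : ∀ i, colimit.ι (G ⋙ E) i ≫ f = E.map (fc i)) {i j : I}
    (u : i ⟶ j) : G.map u ≫ fc j = fc i :=
  E.map_injective <| by
    rw [E.map_comp, ← hf, ← hf, ← colimit.w (G ⋙ E) u, Category.assoc, Functor.comp_map]

end Colimit

theorem ind_iso_criterion_kernel_pairs {C : Type u} [SmallCategory C] [HasPullbacks C]
    {I : Type u} [SmallCategory I] [IsFiltered I] (F : I ⥤ C) (Y : C)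
    (f : colimit (F ⋙ yoneda) ⟶ yoneda.obj Y)
    (fc : ∀ i : I, F.obj i ⟶ Y)
    (hf : ∀ i : I, colimit.ι (F ⋙ yoneda) i ≫ f = yoneda.map (fc i))
    (i₀ : I) (g : Y ⟶ F.obj i₀) (hg : g ≫ fc i₀ = 𝟙 Y)
    (H : ∀ i : I, ∃ (j : I) (τ : i ⟶ j) (w : F.map τ ≫ fc j = 𝟙 (F.obj i) ≫ fc i),
      IsIso (pullback.map (F.map τ) (F.map τ) (fc i) (fc i)
        (𝟙 (F.obj i)) (𝟙 (F.obj i)) (fc j) w w)) :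
    f ≫ (yoneda.map g ≫ colimit.ι (F ⋙ yoneda) i₀) = 𝟙 (colimit (F ⋙ yoneda)) ∧
      (yoneda.map g ≫ colimit.ι (F ⋙ yoneda) i₀) ≫ f = 𝟙 (yoneda.obj Y) ∧
      IsIso f := by
  have hcompat {i j : I} (u : i ⟶ j) : F.map u ≫ fc j = fc i :=
    map_comp_eq_of_colimit_ι_comp_eq_map F yoneda f fc hf u
  have hsf : (yoneda.map g ≫ colimit.ι (F ⋙ yoneda) i₀) ≫ f = 𝟙 (yoneda.obj Y) := by
    rw [Category.assoc, hf, ← yoneda.map_comp, hg, yoneda.map_id]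
  have hfs : f ≫ (yoneda.map g ≫ colimit.ι (F ⋙ yoneda) i₀) = 𝟙 (colimit (F ⋙ yoneda)) := by
    refine colimit.hom_ext fun i => ?_
    let u := IsFiltered.leftToMax i i₀
    let v := IsFiltered.rightToMax i i₀
    obtain ⟨l, τ, w, _⟩ := H (IsFiltered.max i i₀)
    have hab : F.map u ≫ F.map τ = (fc i ≫ g ≫ F.map v) ≫ F.map τ := by
      refine comp_eq_of_isIso_pullbackMap _ _ _ w ?_
      rw [hcompat, Category.assoc, Category.assoc, hcompat, hg, Category.comp_id]
    calc colimit.ι (F ⋙ yoneda) i ≫ f ≫ yoneda.map g ≫ colimit.ι (F ⋙ yoneda) i₀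
        = yoneda.map (fc i ≫ g ≫ F.map v) ≫ colimit.ι (F ⋙ yoneda) _ := by
          rw [← colimit.w (F ⋙ yoneda) v, reassoc_of% (hf i), Functor.comp_map,
            yoneda.map_comp, yoneda.map_comp, Category.assoc, Category.assoc]
      _ = yoneda.map (F.map u) ≫ colimit.ι (F ⋙ yoneda) _ :=
          (map_comp_colimit_ι_eq_of_comp_map_eq F yoneda τ hab).symm
      _ = colimit.ι (F ⋙ yoneda) i ≫ 𝟙 _ := by
          rw [Category.comp_id]
          exact colimit.w (F ⋙ yoneda) u
  exact ⟨hfs, hsf, ⟨_, hfs, hsf⟩⟩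
end

section
/- Let C be a small category with pushouts, I a small filtered category, and X : Iᵒᵖ ⥤ C a cofiltered system, with transition morphisms X(τ) : X j ⟶ X i for τ : i ⟶ j in I. Let Y be an object of C and (f_i : Y ⟶ X i) a cone over the system (i.e. X(τ) ∘ f_j = f_i for all τ : i ⟶ j), inducing the canonical natural transformation φ : colim_i Hom_C(X i, −) ⟶ Hom_C(Y, −) in (C ⥤ Type). Suppose there is i₀ and a morphism g : X i₀ ⟶ Y in C with g ∘ f_{i₀} = 𝟙_Y, and that for every i there is a morphism τ : i ⟶ j in I such that the canonical morphism X i ⊔_Y X i ⟶ X i ⊔_{X j} X i (from the cokernel pair of f_i to the cokernel pair of X(τ), induced by f_i = X(τ) ∘ f_j) is an isomorphism in C. Then φ is an isomorphism; that is, the cone (f_i) exhibits Y as the pro-limit of the system, and the morphism Y ⟶ Pro(X) induced by the cone is an isomorphism of pro-objects with inverse induced by g. -/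
open CategoryTheory CategoryTheory.Limits Opposite

universe u

/-!
Write `F i = Hom(X i, -)`. The composite `colim F ⟶ Hom(Y, -) ⟶ colim F` of `φ` with the map
induced by `g` sends the class of `h : X i ⟶ Z` to the class of `g ≫ f i ≫ h : X i₀ ⟶ Z`, so it is
the identity once `X i ⟶ X i` and `X i₀ ⟶ Y ⟶ X i` become equal after restriction to a common
`X l`. Both maps agree after precomposition with `f k` for `k` above `i` and `i₀`, and an
isomorphism of cokernel pairs `X k ⊔_Y X k ≅ X k ⊔_{X l} X k` says exactly that `X l ⟶ X k`
equalizes every pair of maps out of `X k` that `f k` equalizes.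
-/

theorem comp_eq_comp_of_isIso_pushout_map {C : Type*} [Category C] {Y A B Z : C}
    (u : Y ⟶ A) (v : B ⟶ A) (w : Y ⟶ B) [HasPushout u u] [HasPushout v v] (h : u ≫ 𝟙 A = w ≫ v)
    [IsIso (pushout.map u u v v (𝟙 A) (𝟙 A) w h h)] {a b : A ⟶ Z} (hab : u ≫ a = u ≫ b) :
    v ≫ a = v ≫ b := by
  set p := pushout.map u u v v (𝟙 A) (𝟙 A) w h h
  set d : pushout v v ⟶ Z := inv p ≫ pushout.desc a b hab
  have hinl : pushout.inl v v ≫ d = a := by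
    have : pushout.inl u u ≫ p = pushout.inl v v :=
      (pushout.inl_desc _ _ _).trans (Category.id_comp _)
    rw [← this, Category.assoc, IsIso.hom_inv_id_assoc, pushout.inl_desc]
  have hinr : pushout.inr v v ≫ d = b := by
    have : pushout.inr u u ≫ p = pushout.inr v v :=
      (pushout.inr_desc _ _ _).trans (Category.id_comp _)
    rw [← this, Category.assoc, IsIso.hom_inv_id_assoc, pushout.inr_desc]
  rw [← hinl, ← hinr, pushout.condition_assoc]

theorem coyoneda_map_comp_colimit_ι_of_map_eq {C : Type*} [Category C] {I : Type*} [Category I]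
    (X : Iᵒᵖ ⥤ C) [HasColimit (X.rightOp ⋙ coyoneda)] {i i' l : I}
    (h : X.obj (op i') ⟶ X.obj (op i)) (m : i ⟶ l) (n : i' ⟶ l) (hmn : X.map m.op = X.map n.op ≫ h) :
    coyoneda.map h.op ≫ colimit.ι (X.rightOp ⋙ coyoneda) i' =
      colimit.ι (X.rightOp ⋙ coyoneda) i := by
  rw [← colimit.w (X.rightOp ⋙ coyoneda) m, ← colimit.w (X.rightOp ⋙ coyoneda) n,
    ← Category.assoc]
  congr 1
  change coyoneda.map h.op ≫ coyoneda.map (X.map n.op).op = coyoneda.map (X.map m.op).op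
  rw [← coyoneda.map_comp, ← op_comp, hmn]

theorem map_eq_map_comp_of_isIso_cokernelPair_map {C : Type*} [Category C] [HasPushouts C]
    {I : Type*} [Category I] (X : Iᵒᵖ ⥤ C) {Y : C} (f : ∀ i : I, Y ⟶ X.obj (op i))
    (hcone : ∀ (i j : I) (τ : i ⟶ j), f j ≫ X.map τ.op = f i)
    {i₀ : I} {g : X.obj (op i₀) ⟶ Y} (hg : f i₀ ≫ g = 𝟙 Y)
    {i k l : I} (α : i ⟶ k) (β : i₀ ⟶ k) (τ : k ⟶ l)
    (w : f k ≫ 𝟙 (X.obj (op k)) = f l ≫ X.map τ.op)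
    [IsIso (pushout.map (f k) (f k) (X.map τ.op) (X.map τ.op)
      (𝟙 (X.obj (op k))) (𝟙 (X.obj (op k))) (f l) w w)] :
    X.map (α ≫ τ).op = X.map (β ≫ τ).op ≫ g ≫ f i := by
  have hab : f k ≫ X.map α.op = f k ≫ X.map β.op ≫ g ≫ f i := by
    rw [hcone, reassoc_of% hcone i₀ k β, reassoc_of% hg]
  simpa [X.map_comp] using comp_eq_comp_of_isIso_pushout_map _ _ _ w hab

theorem pro_iso_criterion_cokernel_pairs {C : Type u} [SmallCategory C] [HasPushouts C]
    {I : Type u} [SmallCategory I] [IsFiltered I] (X : Iᵒᵖ ⥤ C) (Y : C)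
    (f : ∀ i : I, Y ⟶ X.obj (op i))
    (hcone : ∀ (i j : I) (τ : i ⟶ j), f j ≫ X.map τ.op = f i)
    (φ : colimit (X.rightOp ⋙ coyoneda) ⟶ coyoneda.obj (op Y))
    (hφ : ∀ i : I, colimit.ι (X.rightOp ⋙ coyoneda) i ≫ φ = coyoneda.map (f i).op)
    (i₀ : I) (g : X.obj (op i₀) ⟶ Y) (hg : f i₀ ≫ g = 𝟙 Y)
    (H : ∀ i : I, ∃ (j : I) (τ : i ⟶ j) (w : f i ≫ 𝟙 (X.obj (op i)) = f j ≫ X.map τ.op),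
      IsIso (pushout.map (f i) (f i) (X.map τ.op) (X.map τ.op)
        (𝟙 (X.obj (op i))) (𝟙 (X.obj (op i))) (f j) w w)) :
    IsIso φ ∧
      φ ≫ (coyoneda.map g.op ≫ colimit.ι (X.rightOp ⋙ coyoneda) i₀) =
        𝟙 (colimit (X.rightOp ⋙ coyoneda)) ∧
      (coyoneda.map g.op ≫ colimit.ι (X.rightOp ⋙ coyoneda) i₀) ≫ φ =
        𝟙 (coyoneda.obj (op Y)) := by
  set ψ := coyoneda.map g.op ≫ colimit.ι (X.rightOp ⋙ coyoneda) i₀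
  have hψφ : ψ ≫ φ = 𝟙 _ := by
    rw [Category.assoc, hφ, ← coyoneda.map_comp, ← op_comp, hg, op_id, coyoneda.map_id]
  have hφψ : φ ≫ ψ = 𝟙 _ := by
    refine colimit.hom_ext fun i => ?_
    obtain ⟨l, τ, w, _⟩ := H (IsFiltered.max i i₀)
    have hmap := map_eq_map_comp_of_isIso_cokernelPair_map X f hcone hg
      (IsFiltered.leftToMax i i₀) (IsFiltered.rightToMax i i₀) τ w
    rw [reassoc_of% hφ, Category.comp_id, ← coyoneda_map_comp_colimit_ι_of_map_eq X _ _ _ hmap,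
      ← Category.assoc, ← coyoneda.map_comp, ← op_comp]
  exact ⟨⟨ψ, hφψ, hψφ⟩, hφψ, hψφ⟩
end

section
/- Let C be a small category, I a small filtered category, G : I ⥤ C a functor, and Q the colimit of G ⋙ y in Pre(C), with cocone components ι_j : y(G j) ⟶ Q. Let P be any presheaf on C and f : P ⟶ Q a morphism of presheaves. If for every object j of I the base change of f along ι_j, namely the projection P ×_Q y(G j) ⟶ y(G j) from the pullback in Pre(C), is an isomorphism, then f is an isomorphism. -/
/-!
Evaluated at any object, the colimit cocone `ι` is jointly surjective. Over an element in the
image of `ι_j`, the fibre of `f` is the fibre of the base change of `f` along `ι_j`, which is a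
singleton since that base change is bijective. Hence every fibre of `f` is a singleton.
-/

open CategoryTheory CategoryTheory.Limits

universe u v

namespace CategoryTheory.Limits.Types

variable {ι : Type*} {X Z : Type u} {Y W : ι → Type u} {f : X ⟶ Z} {g : ∀ i, Y i ⟶ Z}

lemma isIso_of_isPullback_of_jointly_surjective {fst : ∀ i, W i ⟶ X} {snd : ∀ i, W i ⟶ Y i}
    (hpb : ∀ i, IsPullback (fst i) (snd i) f (g i)) [∀ i, IsIso (snd i)]
    (hg : ∀ z, ∃ i y, z = g i y) : IsIso f := by
  rw [isIso_iff_bijective]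
  constructor
  · intro x₁ x₂ hx
    obtain ⟨i, y, hy⟩ := hg (f x₂)
    obtain ⟨w₁, rfl, hw₁⟩ := exists_of_isPullback (hpb i) x₁ y (hx.trans hy)
    obtain ⟨w₂, rfl, hw₂⟩ := exists_of_isPullback (hpb i) x₂ y hy
    have hw : w₁ = w₂ := ((isIso_iff_bijective (snd i)).mp inferInstance).1 (hw₁.trans hw₂.symm)
    rw [hw]
  · intro z
    obtain ⟨i, y, rfl⟩ := hg z
    obtain ⟨w, rfl⟩ := ((isIso_iff_bijective (snd i)).mp inferInstance).2 y
    exact ⟨fst i w, ConcreteCategory.congr_hom (hpb i).w w⟩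

end CategoryTheory.Limits.Types

namespace CategoryTheory.FunctorToTypes

variable {K : Type*} [Category.{v} K] {ι : Type*} {P Q : K ⥤ Type u} {A : ι → K ⥤ Type u}

lemma isIso_of_isIso_pullback_snd_of_jointly_surjective (f : P ⟶ Q) (g : ∀ i, A i ⟶ Q)
    [∀ i, IsIso (pullback.snd f (g i))] (hg : ∀ k (q : Q.obj k), ∃ i a, q = (g i).app k a) :
    IsIso f := by
  rw [NatTrans.isIso_iff_isIso_app]
  intro k
  exact Types.isIso_of_isPullback_of_jointly_surjective
    (fun i => (IsPullback.of_hasPullback f (g i)).map ((evaluation K _).obj k)) (hg k)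

end CategoryTheory.FunctorToTypes

theorem isIso_of_isIso_pullback_along_ind_components_general {C : Type u} [SmallCategory C]
    {I : Type u} [SmallCategory I] (G : I ⥤ C)
    (P : Cᵒᵖ ⥤ Type u) (f : P ⟶ colimit (G ⋙ yoneda))
    (h : ∀ j : I, IsIso (pullback.snd f (colimit.ι (G ⋙ yoneda) j))) :
    IsIso f :=
  FunctorToTypes.isIso_of_isIso_pullback_snd_of_jointly_surjective f (colimit.ι (G ⋙ yoneda))
    (FunctorToTypes.jointly_surjective' _)

theorem isIso_of_isIso_pullback_along_ind_components {C : Type u} [SmallCategory C]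
    {I : Type u} [SmallCategory I] [IsFiltered I] (G : I ⥤ C)
    (P : Cᵒᵖ ⥤ Type u) (f : P ⟶ colimit (G ⋙ yoneda))
    (h : ∀ j : I, IsIso (pullback.snd f (colimit.ι (G ⋙ yoneda) j))) :
    IsIso f :=
  isIso_of_isIso_pullback_along_ind_components_general G P f h
end

section
/- Let C be a small category and X an object of C. Under the composite of the canonical equivalence between the slice category Over(y X) of Pre(C) over y X and the category of presheaves on the costructured-arrow category CostructuredArrow(y, y X), together with the canonical equivalence of CostructuredArrow(y, y X) with the slice category C/X (sending A ⟶ X to y A ⟶ y X), a presheaf on C/X is an ind-object of C/X if and only if the underlying presheaf on C of the corresponding object of Over(y X) is an ind-object of C. -/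
open CategoryTheory CategoryTheory.Limits

universe u

/-- The canonical equivalence between the slice category `C/X` and the category of
costructured arrows `CostructuredArrow yoneda (yoneda.obj X)`, sending `A ⟶ X` to
`yoneda.obj A ⟶ yoneda.obj X`. -/
noncomputable def sliceEquivCostructuredArrow {C : Type u} [SmallCategory C] (X : C) :
    Over X ≌ CostructuredArrow yoneda (yoneda.obj X) :=
  (CostructuredArrow.post (𝟭 C) yoneda X ⋙
    CostructuredArrow.pre (𝟭 C) yoneda (yoneda.obj X)).asEquivalence

/-- The composite equivalence `Over (yoneda.obj X) ≌ ((Over X)ᵒᵖ ⥤ Type u)` obtained from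
`overEquivPresheafCostructuredArrow` together with the equivalence
`Over X ≌ CostructuredArrow yoneda (yoneda.obj X)`. -/
noncomputable def overYonedaEquivPresheafSlice {C : Type u} [SmallCategory C] (X : C) :
    Over (yoneda.obj X) ≌ ((Over X)ᵒᵖ ⥤ Type u) :=
  (overEquivPresheafCostructuredArrow (yoneda.obj X)).trans
    (Equivalence.congrLeft (sliceEquivCostructuredArrow X).op.symm)

/-! A presheaf is an ind-object iff its category of elements `CostructuredArrow yoneda _` is
filtered and finally small, so it suffices to identify the two categories of elements. Transport
along `overYonedaEquivPresheafSlice X` turns the Yoneda embedding of `C/X` into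
`CostructuredArrow.toOver yoneda (yoneda.obj X)`, and costructured arrows of `toOver` over `Q`
are costructured arrows of `yoneda` over `Q.left`. -/

universe v

namespace CategoryTheory

theorem isIndObject_of_equivalence {C D : Type*} [Category.{v} C] [Category.{v} D]
    {A : Cᵒᵖ ⥤ Type v} {B : Dᵒᵖ ⥤ Type v}
    (e : CostructuredArrow yoneda A ≌ CostructuredArrow yoneda B) (hA : IsIndObject A) :
    IsIndObject B := by
  have := hA.isFiltered
  have := hA.finallySmall
  exact (isIndObject_iff B).2
    ⟨IsFiltered.of_equivalence e, finallySmall_of_final_of_finallySmall e.functor⟩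

theorem isIndObject_iff_of_equivalence {C D : Type*} [Category.{v} C] [Category.{v} D]
    {A : Cᵒᵖ ⥤ Type v} {B : Dᵒᵖ ⥤ Type v}
    (e : CostructuredArrow yoneda A ≌ CostructuredArrow yoneda B) :
    IsIndObject A ↔ IsIndObject B :=
  ⟨isIndObject_of_equivalence e, isIndObject_of_equivalence e.symm⟩

def Functor.FullyFaithful.compYonedaCompWhiskeringLeft {C D : Type*} [Category.{v} C]
    [Category.{v} D] {F : C ⥤ D} (hF : F.FullyFaithful) :
    F ⋙ yoneda ⋙ (Functor.whiskeringLeft _ _ _).obj F.op ≅ yoneda :=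
  Functor.isoWhiskerLeft F (Functor.isoWhiskerRight uliftYonedaIsoYoneda.{v}.symm _) ≪≫
    hF.compUliftYonedaCompWhiskeringLeft ≪≫ uliftYonedaIsoYoneda.{v}

end CategoryTheory

noncomputable def sliceToOverCompOverYonedaEquivPresheafSlice {C : Type u} [SmallCategory C]
    (X : C) :
    (sliceEquivCostructuredArrow X).functor ⋙ CostructuredArrow.toOver yoneda (yoneda.obj X) ⋙
      (overYonedaEquivPresheafSlice X).functor ≅ yoneda :=
  Functor.isoWhiskerLeft _ (Functor.isoWhiskerRight
    (CostructuredArrow.toOverCompOverEquivPresheafCostructuredArrow (yoneda.obj X))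
    ((Functor.whiskeringLeft _ _ _).obj (sliceEquivCostructuredArrow X).functor.op)) ≪≫
    (sliceEquivCostructuredArrow X).fullyFaithfulFunctor.compYonedaCompWhiskeringLeft

noncomputable def costructuredArrowYonedaSliceEquiv {C : Type u} [SmallCategory C] (X : C)
    (P : (Over X)ᵒᵖ ⥤ Type u) :
    CostructuredArrow yoneda P ≌
      CostructuredArrow yoneda ((overYonedaEquivPresheafSlice X).inverse.obj P).left :=
  (CostructuredArrow.map₂ (S := yoneda) (T := P)
    (sliceToOverCompOverYonedaEquivPresheafSlice X).isoCompInverse.hom (𝟙 _)).asEquivalence.trans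
    (CostructuredArrow.costructuredArrowToOverEquivalence yoneda _)

theorem isIndObject_slice_iff {C : Type u} [SmallCategory C] (X : C)
    (P : (Over X)ᵒᵖ ⥤ Type u) :
    IsIndObject P ↔
      IsIndObject ((Over.forget (yoneda.obj X)).obj
        ((overYonedaEquivPresheafSlice X).inverse.obj P)) :=
  isIndObject_iff_of_equivalence (costructuredArrowYonedaSliceEquiv X P)
end

section
/- Let L be a first-order language, κ an infinite cardinal, M a κ-compact L-structure, and (I, ≤) a directed partial order of cardinality less than κ. Let (X i, u i j) be an ∅-definable directed system over I and (f i : X i → Y) a compatible family of ∅-definable maps to an ∅-definable set Y ⊆ (Fin m → M). Assume that the induced map on the colimit of points is injective, i.e. for every i and all x, x' ∈ X i with f i x = f i x' there exists j ≥ i with u i j x = u i j x'. Then for every i there exists j ≥ i such that for ALL x, x' ∈ X i, f i x = f i x' implies u i j x = u i j x'. -/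
open FirstOrder Cardinal

/-- An `L`-structure `M` is `κ`-compact if every set of fewer than `κ` formulas (in any
variable index type) that is finitely realized in `M` is realized in `M`. -/
def KappaCompact (L : FirstOrder.Language.{0, 0}) (κ : Cardinal.{0}) (M : Type)
    [L.Structure M] : Prop :=
  ∀ (α : Type) (Φ : Set (L.Formula α)), #Φ < κ →
    (∀ Φ₀ : Set (L.Formula α), Φ₀ ⊆ Φ → Φ₀.Finite →
      ∃ v : α → M, ∀ φ ∈ Φ₀, φ.Realize v) →
    ∃ v : α → M, ∀ φ ∈ Φ, φ.Realize v

/-- A function `g` from a subset `X` of `Fin n → M` to `Fin m → M` is ∅-definable if its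
graph is a ∅-definable subset of `(Fin n ⊕ Fin m) → M`. -/
def DefinableFun (L : FirstOrder.Language.{0, 0}) (M : Type) [L.Structure M]
    {n m : ℕ} (X : Set (Fin n → M)) (g : (Fin n → M) → (Fin m → M)) : Prop :=
  Set.Definable (∅ : Set M) L
    {z : Fin n ⊕ Fin m → M | z ∘ Sum.inl ∈ X ∧ g (z ∘ Sum.inl) = z ∘ Sum.inr}

/-- A ∅-definable directed system of ∅-definable sets and ∅-definable maps,
indexed by a partial order `I`. -/
structure DefDirectedSystem (L : FirstOrder.Language.{0, 0}) (M : Type) [L.Structure M]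
    (I : Type) [PartialOrder I] where
  n : I → ℕ
  X : ∀ i, Set (Fin (n i) → M)
  X_def : ∀ i, Set.Definable (∅ : Set M) L (X i)
  u : ∀ i j, i ≤ j → (Fin (n i) → M) → (Fin (n j) → M)
  u_mem : ∀ i j (h : i ≤ j), ∀ x ∈ X i, u i j h x ∈ X j
  u_def : ∀ i j (h : i ≤ j), DefinableFun L M (X i) (u i j h)
  u_id : ∀ i, ∀ x ∈ X i, u i i le_rfl x = x
  u_comp : ∀ i j k (hij : i ≤ j) (hjk : j ≤ k), ∀ x ∈ X i,
    u j k hjk (u i j hij x) = u i k (hij.trans hjk) x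

namespace KappaCompact

variable {L : FirstOrder.Language.{0, 0}} {κ : Cardinal.{0}} {M : Type} [L.Structure M]

theorem nonempty_iInter_of_directed (hM : KappaCompact L κ M) {α ι : Type} [Nonempty ι]
    (hι : #ι < κ) {D : ι → Set (α → M)} (hD : ∀ i, Set.Definable (∅ : Set M) L (D i))
    (hdir : Directed (· ⊇ ·) D) (hne : ∀ i, (D i).Nonempty) :
    (⋂ i, D i).Nonempty := by
  choose φ hφ using fun i => Set.empty_definable_iff.1 (hD i)
  have hcard : #(Set.range φ) < κ := Cardinal.mk_range_le.trans_lt hι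
  obtain ⟨v, hv⟩ := hM α (Set.range φ) hcard fun Φ₀ hΦ₀ hfin => by
    rw [← Set.image_univ] at hΦ₀
    obtain ⟨t, -, ht, rfl⟩ := hfin.exists_subset_finite_image_eq hΦ₀
    obtain ⟨k, hk⟩ := hdir.finset_le ht.toFinset
    obtain ⟨v, hv⟩ := hne k
    refine ⟨v, Set.forall_mem_image.2 fun i hi => ?_⟩
    have := hk i (ht.mem_toFinset.2 hi) hv
    rwa [hφ] at this
  refine ⟨v, Set.mem_iInter.2 fun i => ?_⟩
  rw [hφ]
  exact hv _ (Set.mem_range_self i)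

end KappaCompact

section KernelPair

variable {L : FirstOrder.Language.{0, 0}} {M : Type} [L.Structure M] {n m : ℕ}

def kernelPair (X : Set (Fin n → M)) (g : (Fin n → M) → (Fin m → M)) :
    Set (Fin n ⊕ Fin n → M) :=
  {z | z ∘ Sum.inl ∈ X ∧ z ∘ Sum.inr ∈ X ∧ g (z ∘ Sum.inl) = g (z ∘ Sum.inr)}

theorem DefinableFun.definable_kernelPair {X : Set (Fin n → M)}
    {g : (Fin n → M) → (Fin m → M)} (hg : DefinableFun L M X g) :
    Set.Definable (∅ : Set M) L (kernelPair X g) := by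
  have hboth := (hg.preimage_comp (Sum.map Sum.inl id)).inter
    (hg.preimage_comp (Sum.map Sum.inr id))
  convert hboth.exists_of_finite using 1
  ext z
  simp only [kernelPair, Set.mem_ofPred_eq, Set.mem_inter_iff, Set.mem_preimage,
    Sum.elim_comp_map, Function.comp_id, Sum.elim_comp_inl, Sum.elim_comp_inr]
  constructor
  · rintro ⟨hx, hx', hgg⟩
    exact ⟨g (z ∘ Sum.inl), ⟨hx, rfl⟩, hx', hgg.symm⟩
  · rintro ⟨y, ⟨hx, rfl⟩, hx', hgg⟩
    exact ⟨hx, hx', hgg.symm⟩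

end KernelPair

namespace DefDirectedSystem

variable {L : FirstOrder.Language.{0, 0}} {M : Type} [L.Structure M] {I : Type} [PartialOrder I]

theorem kernelPair_u_subset (S : DefDirectedSystem L M I) {i j k : I} (hij : i ≤ j)
    (hjk : j ≤ k) :
    kernelPair (S.X i) (S.u i j hij) ⊆ kernelPair (S.X i) (S.u i k (hij.trans hjk)) := by
  rintro z ⟨hx, hx', hu⟩
  refine ⟨hx, hx', ?_⟩
  rw [← S.u_comp i j k hij hjk _ hx, ← S.u_comp i j k hij hjk _ hx', hu]

end DefDirectedSystem

theorem pointwise_injectivity_uniformizes_general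
    (L : FirstOrder.Language.{0, 0}) (κ : Cardinal.{0}) (M : Type) [L.Structure M]
    (hM : KappaCompact L κ M)
    (I : Type) [PartialOrder I] [IsDirected I (· ≤ ·)] (hI : #I < κ)
    (S : DefDirectedSystem L M I)
    {m : ℕ}
    (f : ∀ i, (Fin (S.n i) → M) → (Fin m → M))
    (f_def : ∀ i, DefinableFun L M (S.X i) (f i))
    (hinj : ∀ i, ∀ x ∈ S.X i, ∀ x' ∈ S.X i, f i x = f i x' →
      ∃ j, ∃ h : i ≤ j, S.u i j h x = S.u i j h x') :
    ∀ i, ∃ j, ∃ h : i ≤ j, ∀ x ∈ S.X i, ∀ x' ∈ S.X i,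
      f i x = f i x' → S.u i j h x = S.u i j h x' := by
  intro i
  by_contra! hbad
  -- The pairs identified by `f i` but not yet by `u i j` form a decreasing family of definable
  -- sets, indexed by fewer than `κ` indices `j ≥ i`; compactness yields a pair in all of them.
  let D : Set.Ici i → Set (Fin (S.n i) ⊕ Fin (S.n i) → M) := fun j =>
    kernelPair (S.X i) (f i) \ kernelPair (S.X i) (S.u i j j.2)
  have hdir : Directed (· ⊇ ·) D := fun j k => by
    obtain ⟨l, hjl, hkl⟩ := directed_of (· ≤ ·) j.1 k.1
    exact ⟨⟨l, j.2.trans hjl⟩, Set.sdiff_subset_sdiff_right (S.kernelPair_u_subset j.2 hjl),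
      Set.sdiff_subset_sdiff_right (S.kernelPair_u_subset k.2 hkl)⟩
  have hne : ∀ j, (D j).Nonempty := fun j => by
    obtain ⟨x, hx, x', hx', hf, hu⟩ := hbad j j.2
    exact ⟨Sum.elim x x', ⟨hx, hx', hf⟩, fun h => hu h.2.2⟩
  have : Nonempty (Set.Ici i) := ⟨⟨i, le_rfl⟩⟩
  obtain ⟨z, hz⟩ := hM.nonempty_iInter_of_directed (D := D)
    ((Cardinal.mk_subtype_le _).trans_lt hI)
    (fun j => (f_def i).definable_kernelPair.sdiff (S.u_def i j j.2).definable_kernelPair)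
    hdir hne
  rw [Set.mem_iInter] at hz
  obtain ⟨hx, hx', hf⟩ := (hz ⟨i, le_rfl⟩).1
  obtain ⟨j, hij, hu⟩ := hinj i _ hx _ hx' hf
  exact (hz ⟨j, hij⟩).2 ⟨hx, hx', hu⟩

theorem pointwise_injectivity_uniformizes
    (L : FirstOrder.Language.{0, 0}) (κ : Cardinal.{0}) (M : Type) [L.Structure M]
    (hκ : ℵ₀ ≤ κ) (hM : KappaCompact L κ M)
    (I : Type) [PartialOrder I] [IsDirected I (· ≤ ·)] (hI : #I < κ)
    (S : DefDirectedSystem L M I)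
    {m : ℕ} (Y : Set (Fin m → M)) (hY : Set.Definable (∅ : Set M) L Y)
    (f : ∀ i, (Fin (S.n i) → M) → (Fin m → M))
    (f_mem : ∀ i, ∀ x ∈ S.X i, f i x ∈ Y)
    (f_def : ∀ i, DefinableFun L M (S.X i) (f i))
    (f_compat : ∀ i j (h : i ≤ j), ∀ x ∈ S.X i, f j (S.u i j h x) = f i x)
    (hinj : ∀ i, ∀ x ∈ S.X i, ∀ x' ∈ S.X i, f i x = f i x' →
      ∃ j, ∃ h : i ≤ j, S.u i j h x = S.u i j h x') :
    ∀ i, ∃ j, ∃ h : i ≤ j, ∀ x ∈ S.X i, ∀ x' ∈ S.X i,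
      f i x = f i x' → S.u i j h x = S.u i j h x' :=
  pointwise_injectivity_uniformizes_general L κ M hM I hI S f f_def hinj
end

section
/- Let L be a first-order language, κ an infinite cardinal, M a κ-compact L-structure, and (I, ≤) a directed partial order of cardinality less than κ. Let (X i, v j i) be an ∅-definable inverse system over I and (f i : Y → X i) a compatible family of ∅-definable maps from an ∅-definable set Y ⊆ (Fin m → M). Assume the induced map from Y to the inverse limit of points is injective, i.e. for all y, y' ∈ Y, if f i y = f i y' for every i ∈ I then y = y'. Then there exists k ∈ I such that f k : Y → X k is injective. -/
open FirstOrder Cardinal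

/-- A ∅-definable inverse (cofiltered) system of ∅-definable sets and ∅-definable maps,
indexed by a partial order `I`: for `i ≤ j`, `v i j : X j → X i`. -/
structure DefInverseSystem (L : FirstOrder.Language.{0, 0}) (M : Type) [L.Structure M]
    (I : Type) [PartialOrder I] where
  n : I → ℕ
  X : ∀ i, Set (Fin (n i) → M)
  X_def : ∀ i, Set.Definable (∅ : Set M) L (X i)
  v : ∀ i j, i ≤ j → (Fin (n j) → M) → (Fin (n i) → M)
  v_mem : ∀ i j (h : i ≤ j), ∀ x ∈ X j, v i j h x ∈ X i
  v_def : ∀ i j (h : i ≤ j), DefinableFun L M (X j) (v i j h)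
  v_id : ∀ i, ∀ x ∈ X i, v i i le_rfl x = x
  v_comp : ∀ i j k (hij : i ≤ j) (hjk : j ≤ k), ∀ x ∈ X k,
    v i j hij (v j k hjk x) = v i k (hij.trans hjk) x

/-! If no `f k` were injective, the sets of collision pairs `(y, y')` with `y ≠ y'` and
`f k y = f k y'` would be nonempty, ∅-definable, and decreasing along the directed order `I`.
Fewer than `κ` of them thus form a finitely satisfiable type, which `κ`-compactness realizes by
a pair `y ≠ y'` with `f i y = f i y'` for every `i`, contradicting injectivity on the limit. -/

theorem Set.definable_setOf_comp_inl_eq_comp_inr {L : FirstOrder.Language} {M : Type*}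
    [L.Structure M] (A : Set M) (α : Type*) [Finite α] :
    A.Definable L {z : α ⊕ α → M | z ∘ Sum.inl = z ∘ Sum.inr} := by
  have h_coord : ∀ a : α, A.Definable L {z : α ⊕ α → M | z (Sum.inl a) = z (Sum.inr a)} :=
    fun a => ⟨(Language.Term.var (Sum.inl a)).equal (Language.Term.var (Sum.inr a)), by ext; simp⟩
  convert Set.definable_iInter_of_finite h_coord using 1
  ext z
  simp [funext_iff]

section KappaCompact

variable {L : FirstOrder.Language.{0, 0}} {κ : Cardinal.{0}} {M : Type} [L.Structure M]

theorem KappaCompact.nonempty_iInter (hM : KappaCompact L κ M) {α I : Type} (hI : #I < κ)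
    {A : I → Set (α → M)} (hA : ∀ i, Set.Definable (∅ : Set M) L (A i))
    (h_fip : ∀ s : Finset I, (⋂ i ∈ s, A i).Nonempty) : (⋂ i, A i).Nonempty := by
  classical
  choose φ hφ using fun i => Set.empty_definable_iff.mp (hA i)
  have h_fin_sat : ∀ Φ₀ ⊆ Set.range φ, Φ₀.Finite → ∃ v : α → M, ∀ ψ ∈ Φ₀, ψ.Realize v := by
    intro Φ₀ hsub hfin
    obtain ⟨s, -, hs⟩ := Finset.subset_set_image_iff.mp
      (show ↑hfin.toFinset ⊆ φ '' Set.univ by simpa using hsub)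
    obtain ⟨v, hv⟩ := h_fip s
    refine ⟨v, fun ψ hψ => ?_⟩
    obtain ⟨i, hi, rfl⟩ := Finset.mem_image.mp (hs ▸ hfin.mem_toFinset.mpr hψ)
    simpa [hφ] using Set.mem_iInter₂.mp hv i hi
  obtain ⟨v, hv⟩ := hM α (Set.range φ) (Cardinal.mk_range_le.trans_lt hI) h_fin_sat
  exact ⟨v, Set.mem_iInter.mpr fun i => hφ i ▸ hv _ ⟨i, rfl⟩⟩

theorem KappaCompact.nonempty_iInter_of_antitone (hM : KappaCompact L κ M) {α I : Type}
    [Preorder I] [IsDirected I (· ≤ ·)] [Nonempty I] (hI : #I < κ)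
    {A : I → Set (α → M)} (hA : ∀ i, Set.Definable (∅ : Set M) L (A i)) (h_anti : Antitone A)
    (h_ne : ∀ i, (A i).Nonempty) : (⋂ i, A i).Nonempty := by
  refine hM.nonempty_iInter hI hA fun s => ?_
  obtain ⟨k, hk⟩ := Finset.exists_le s
  exact (h_ne k).mono (Set.subset_iInter₂ fun i hi => h_anti (hk i hi))

end KappaCompact

section Collisions

variable {M : Type} {α β : Type}

/-- A pair `(y, y')` is encoded as `Sum.elim y y'`. -/
def collisions (Y : Set (α → M)) (g : (α → M) → β) : Set (α ⊕ α → M) :=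
  {z | z ∘ Sum.inl ∈ Y ∧ z ∘ Sum.inr ∈ Y ∧ g (z ∘ Sum.inl) = g (z ∘ Sum.inr) ∧
    z ∘ Sum.inl ≠ z ∘ Sum.inr}

theorem collisions_nonempty_iff {Y : Set (α → M)} {g : (α → M) → β} :
    (collisions Y g).Nonempty ↔ ¬ Set.InjOn g Y := by
  simp only [Set.InjOn, collisions, Set.Nonempty, Set.mem_ofPred_eq, not_forall]
  constructor
  · rintro ⟨z, hz, hz', hg, hne⟩
    exact ⟨_, hz, _, hz', hg, hne⟩
  · rintro ⟨y, hy, y', hy', hg, hne⟩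
    exact ⟨Sum.elim y y', hy, hy', hg, hne⟩

theorem collisions_subset_of_factor {γ : Type} {Y : Set (α → M)} {g : (α → M) → β}
    {g' : (α → M) → γ} (h : β → γ) (hg : ∀ y ∈ Y, h (g y) = g' y) :
    collisions Y g ⊆ collisions Y g' := by
  rintro z ⟨hz, hz', heq, hne⟩
  exact ⟨hz, hz', by rw [← hg _ hz, ← hg _ hz', heq], hne⟩

theorem DefinableFun.definable_collisions {L : FirstOrder.Language.{0, 0}} {M : Type}
    [L.Structure M] {m n : ℕ} {Y : Set (Fin m → M)} {g : (Fin m → M) → (Fin n → M)}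
    (hg : DefinableFun L M Y g) : Set.Definable (∅ : Set M) L (collisions Y g) := by
  have h_common_value := ((hg.preimage_comp (Sum.map Sum.inl id)).inter
    (hg.preimage_comp (Sum.map Sum.inr id))).exists_of_finite
  convert h_common_value.inter (Set.definable_setOf_comp_inl_eq_comp_inr _ _).compl using 1
  ext z
  simp only [collisions, Set.mem_ofPred_eq, Set.mem_inter_iff, Set.mem_preimage, Set.mem_compl_iff,
    Sum.elim_comp_map, Sum.elim_comp_inl, Sum.elim_comp_inr, Function.comp_id]
  constructor
  · rintro ⟨hz, hz', heq, hne⟩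
    exact ⟨⟨g (z ∘ Sum.inl), ⟨hz, rfl⟩, hz', heq.symm⟩, hne⟩
  · rintro ⟨⟨u, ⟨hz, rfl⟩, hz', heq⟩, hne⟩
    exact ⟨hz, hz', heq.symm, hne⟩

end Collisions

theorem pro_injective_on_limit_stabilizes_general
    (L : FirstOrder.Language.{0, 0}) (κ : Cardinal.{0}) (M : Type) [L.Structure M]
    (hM : KappaCompact L κ M)
    (I : Type) [PartialOrder I] [IsDirected I (· ≤ ·)] [Nonempty I] (hI : #I < κ)
    (S : DefInverseSystem L M I)
    {m : ℕ} (Y : Set (Fin m → M))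
    (f : ∀ i, (Fin m → M) → (Fin (S.n i) → M))
    (f_def : ∀ i, DefinableFun L M Y (f i))
    (f_compat : ∀ i j (h : i ≤ j), ∀ y ∈ Y, S.v i j h (f j y) = f i y)
    (hinj : ∀ y ∈ Y, ∀ y' ∈ Y, (∀ i, f i y = f i y') → y = y') :
    ∃ k, ∀ y ∈ Y, ∀ y' ∈ Y, f k y = f k y' → y = y' := by
  by_contra h_never_inj
  have h_ne : ∀ i, (collisions Y (f i)).Nonempty := fun i =>
    collisions_nonempty_iff.mpr fun h_inj => h_never_inj ⟨i, h_inj⟩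
  have h_anti : Antitone fun i => collisions Y (f i) := fun i j hij =>
    collisions_subset_of_factor (S.v i j hij) (f_compat i j hij)
  obtain ⟨z, hz⟩ := hM.nonempty_iInter_of_antitone hI (fun i => (f_def i).definable_collisions)
    h_anti h_ne
  obtain ⟨hy, hy', -, hne⟩ := Set.mem_iInter.mp hz (Classical.arbitrary I)
  exact hne (hinj _ hy _ hy' fun i => (Set.mem_iInter.mp hz i).2.2.1)

theorem pro_injective_on_limit_stabilizes
    (L : FirstOrder.Language.{0, 0}) (κ : Cardinal.{0}) (M : Type) [L.Structure M]
    (hκ : ℵ₀ ≤ κ) (hM : KappaCompact L κ M)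
    (I : Type) [PartialOrder I] [IsDirected I (· ≤ ·)] [Nonempty I] (hI : #I < κ)
    (S : DefInverseSystem L M I)
    {m : ℕ} (Y : Set (Fin m → M)) (hY : Set.Definable (∅ : Set M) L Y)
    (f : ∀ i, (Fin m → M) → (Fin (S.n i) → M))
    (f_mem : ∀ i, ∀ y ∈ Y, f i y ∈ S.X i)
    (f_def : ∀ i, DefinableFun L M Y (f i))
    (f_compat : ∀ i j (h : i ≤ j), ∀ y ∈ Y, S.v i j h (f j y) = f i y)
    (hinj : ∀ y ∈ Y, ∀ y' ∈ Y, (∀ i, f i y = f i y') → y = y') :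
    ∃ k, ∀ y ∈ Y, ∀ y' ∈ Y, f k y = f k y' → y = y' :=
  pro_injective_on_limit_stabilizes_general L κ M hM I hI S Y f f_def f_compat hinj
end

section
/- Let L be a first-order language, κ an infinite cardinal, M a κ-compact L-structure, and (I, ≤) a directed partial order of cardinality less than κ. Let (X i, v j i) be an ∅-definable inverse system over I and (f i : Y → X i) a compatible family of ∅-definable maps from an ∅-definable set Y ⊆ (Fin m → M). Assume the induced map from Y to the inverse limit of points is surjective, i.e. for every family (x i)_{i ∈ I} with x i ∈ X i and v j i (x j) = x i for all i ≤ j, there exists y ∈ Y with f i y = x i for all i. Then for every i ∈ I there exists j ≥ i such that the image v j i '' (X j) equals the image f i '' Y. -/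
open FirstOrder Cardinal

/-!
Suppose that for some `i` every image `v i j '' X j` (`j ≥ i`) contains a point outside the
∅-definable set `f i '' Y`. The conditions "`x` is a thread of the system with `x i ∉ f i '' Y`"
form fewer than `κ` formulas in the variables `Σ j, Fin (n j)`. Finitely many of them only involve
indices below some `J ≥ i`, so they are realized by pulling back a single bad point of `X J` along
the system. By `κ`-compactness some thread `x` with `x i ∉ f i '' Y` exists, and it is not in the
image of `Y`, contradicting surjectivity.
-/

section

variable {L : FirstOrder.Language.{0, 0}} {M : Type} [L.Structure M]

theorem KappaCompact.nonempty_iInter_s12 {κ : Cardinal.{0}} (hM : KappaCompact L κ M)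
    {α C : Type} {P : C → Set (α → M)} (hP : ∀ c, Set.Definable (∅ : Set M) L (P c))
    (hC : #C < κ) (hfin : ∀ s : Set C, s.Finite → (⋂ c ∈ s, P c).Nonempty) :
    (⋂ c, P c).Nonempty := by
  choose φ hφ using fun c => Set.empty_definable_iff.mp (hP c)
  obtain ⟨w, hw⟩ := hM α (Set.range φ) (mk_range_le.trans_lt hC) fun Φ₀ hsub hΦ₀ => by
    obtain ⟨s, -, hs, rfl⟩ :=
      Set.exists_subset_image_finite_and.1 ⟨Φ₀, Set.image_univ ▸ hsub, hΦ₀, rfl⟩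
    obtain ⟨w, hw⟩ := hfin s hs
    refine ⟨w, ?_⟩
    rintro _ ⟨c, hc, rfl⟩
    simpa [hφ c] using Set.mem_iInter₂.1 hw c hc
  exact ⟨w, Set.mem_iInter.2 fun c => by rw [hφ c]; exact hw _ ⟨c, rfl⟩⟩

namespace DefinableFun

variable {n m : ℕ} {X : Set (Fin n → M)} {g : (Fin n → M) → (Fin m → M)}

theorem definable_image (hg : DefinableFun L M X g) : Set.Definable (∅ : Set M) L (g '' X) := by
  have hswap := (Set.Definable.preimage_comp (Sum.swap : Fin n ⊕ Fin m → Fin m ⊕ Fin n) hg)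
  convert hswap.image_comp_sumInl_fin n using 1
  ext a
  constructor
  · rintro ⟨x, hx, rfl⟩
    exact ⟨Sum.elim (g x) x, ⟨hx, rfl⟩, rfl⟩
  · rintro ⟨z, hz, rfl⟩
    exact ⟨z ∘ Sum.inr, hz⟩

theorem definable_preimage_graph (hg : DefinableFun L M X g) {β : Type} (a : Fin n → β)
    (b : Fin m → β) :
    Set.Definable (∅ : Set M) L {w : β → M | w ∘ a ∈ X ∧ g (w ∘ a) = w ∘ b} :=
  hg.preimage_comp (Sum.elim a b)

end DefinableFun

namespace DefInverseSystem

variable {I : Type} [PartialOrder I] (S : DefInverseSystem L M I)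

def IsThread (x : ∀ i, Fin (S.n i) → M) : Prop :=
  (∀ i, x i ∈ S.X i) ∧ ∀ i j (h : i ≤ j), S.v i j h (x j) = x i

theorem nonempty_X_of_le [IsDirected I (· ≤ ·)] {i : I}
    (h : ∀ j, i ≤ j → (S.X j).Nonempty) (j : I) : (S.X j).Nonempty := by
  obtain ⟨k, hik, hjk⟩ := directed_of (· ≤ ·) i j
  exact (h k hik).image _ |>.mono (Set.image_subset_iff.2 fun x hx => S.v_mem j k hjk x hx)

open Classical in
noncomputable def extendBelow (J : I) (x : Fin (S.n J) → M) (d : ∀ j, Fin (S.n j) → M) (j : I) :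
    Fin (S.n j) → M :=
  if h : j ≤ J then S.v j J h x else d j

variable {S} {J : I} {x : Fin (S.n J) → M} {d : ∀ j, Fin (S.n j) → M}

theorem extendBelow_of_le {j : I} (h : j ≤ J) : S.extendBelow J x d j = S.v j J h x :=
  dif_pos h

theorem extendBelow_mem (hx : x ∈ S.X J) {k : I} (hk : k ≤ J) :
    S.extendBelow J x d k ∈ S.X k := by
  rw [extendBelow_of_le hk]
  exact S.v_mem k J hk x hx

theorem v_extendBelow (hx : x ∈ S.X J) {j k : I} (hjk : j ≤ k) (hk : k ≤ J) :
    S.v j k hjk (S.extendBelow J x d k) = S.extendBelow J x d j := by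
  rw [extendBelow_of_le hk, extendBelow_of_le (hjk.trans hk), S.v_comp j k J hjk hk x hx]

variable (S)

theorem exists_isThread_mem [IsDirected I (· ≤ ·)] {κ : Cardinal.{0}} (hκ : ℵ₀ ≤ κ)
    (hM : KappaCompact L κ M) (hI : #I < κ) {i : I} {D : Set (Fin (S.n i) → M)}
    (hD : Set.Definable (∅ : Set M) L D) (hmeet : ∀ j (h : i ≤ j), ∃ x ∈ S.X j, S.v i j h x ∈ D) :
    ∃ x, S.IsThread x ∧ x i ∈ D := by
  -- `M` may be empty, so the default values `d` off the indices below `J` come from the `X j`.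
  choose d _ using S.nonempty_X_of_le fun j h => (hmeet j h).imp fun _ hx => hx.1
  -- A thread is encoded as one tuple indexed by `Σ j, Fin (S.n j)`; every condition also asks
  -- for coordinate `i` to lie in `D`, so the pairs `j ≤ k` alone index the conditions.
  let P : {p : I × I // p.1 ≤ p.2} → Set ((Σ j, Fin (S.n j)) → M) := fun p =>
    {w | (fun t => w ⟨p.1.2, t⟩) ∈ S.X p.1.2 ∧
      S.v p.1.1 p.1.2 p.2 (fun t => w ⟨p.1.2, t⟩) = fun t => w ⟨p.1.1, t⟩} ∩
    (fun w t => w ⟨i, t⟩) ⁻¹' D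
  have hP : ∀ p, Set.Definable (∅ : Set M) L (P p) := fun p =>
    ((S.v_def _ _ p.2).definable_preimage_graph _ _).inter (hD.preimage_comp _)
  have hcard : #{p : I × I // p.1 ≤ p.2} < κ :=
    (mk_subtype_le _).trans_lt (by simpa using mul_lt_of_lt hκ hI hI)
  obtain ⟨w, hw⟩ := hM.nonempty_iInter_s12 hP hcard fun s hs => by
    have : Nonempty I := ⟨i⟩
    obtain ⟨J, hJ⟩ := ((hs.image fun p => p.1.2).insert i).bddAbove
    obtain ⟨x, hx, hxD⟩ := hmeet J (hJ (Set.mem_insert _ _))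
    refine ⟨Sigma.uncurry (S.extendBelow J x d), Set.mem_iInter₂.2 fun p hp => ?_⟩
    have hpJ : p.1.2 ≤ J := hJ (Set.mem_insert_of_mem _ ⟨p, hp, rfl⟩)
    refine ⟨⟨extendBelow_mem hx hpJ, v_extendBelow hx p.2 hpJ⟩, ?_⟩
    show S.extendBelow J x d i ∈ D
    rwa [extendBelow_of_le (hJ (Set.mem_insert _ _))]
  rw [Set.mem_iInter] at hw
  exact ⟨fun j t => w ⟨j, t⟩, ⟨fun j => (hw ⟨(j, j), le_rfl⟩).1.1,
    fun j k h => (hw ⟨(j, k), h⟩).1.2⟩, (hw ⟨(i, i), le_rfl⟩).2⟩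

end DefInverseSystem

end

theorem pro_surjective_on_limit_images_agree_general
    (L : FirstOrder.Language.{0, 0}) (κ : Cardinal.{0}) (M : Type) [L.Structure M]
    (hκ : ℵ₀ ≤ κ) (hM : KappaCompact L κ M)
    (I : Type) [PartialOrder I] [IsDirected I (· ≤ ·)] (hI : #I < κ)
    (S : DefInverseSystem L M I)
    {m : ℕ} (Y : Set (Fin m → M))
    (f : ∀ i, (Fin m → M) → (Fin (S.n i) → M))
    (f_mem : ∀ i, ∀ y ∈ Y, f i y ∈ S.X i)
    (f_def : ∀ i, DefinableFun L M Y (f i))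
    (f_compat : ∀ i j (h : i ≤ j), ∀ y ∈ Y, S.v i j h (f j y) = f i y)
    (hsurj : ∀ x : ∀ i, Fin (S.n i) → M, (∀ i, x i ∈ S.X i) →
      (∀ i j (h : i ≤ j), S.v i j h (x j) = x i) → ∃ y ∈ Y, ∀ i, f i y = x i) :
    ∀ i, ∃ j, ∃ h : i ≤ j, S.v i j h '' S.X j = f i '' Y := by
  intro i
  by_contra! hne
  have image_subset : ∀ j (h : i ≤ j), f i '' Y ⊆ S.v i j h '' S.X j := by
    rintro j h _ ⟨y, hy, rfl⟩
    exact ⟨f j y, f_mem j y hy, f_compat i j h y hy⟩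
  obtain ⟨x, hx, hxi⟩ := S.exists_isThread_mem hκ hM hI (f_def i).definable_image.compl
    fun j h => by
      obtain ⟨_, ⟨x, hx, rfl⟩, hxY⟩ :=
        Set.not_subset.1 fun hsub => hne j h (hsub.antisymm (image_subset j h))
      exact ⟨x, hx, hxY⟩
  obtain ⟨y, hy, hfy⟩ := hsurj x hx.1 hx.2
  exact hxi ⟨y, hy, hfy i⟩

theorem pro_surjective_on_limit_images_agree
    (L : FirstOrder.Language.{0, 0}) (κ : Cardinal.{0}) (M : Type) [L.Structure M]
    (hκ : ℵ₀ ≤ κ) (hM : KappaCompact L κ M)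
    (I : Type) [PartialOrder I] [IsDirected I (· ≤ ·)] (hI : #I < κ)
    (S : DefInverseSystem L M I)
    {m : ℕ} (Y : Set (Fin m → M)) (hY : Set.Definable (∅ : Set M) L Y)
    (f : ∀ i, (Fin m → M) → (Fin (S.n i) → M))
    (f_mem : ∀ i, ∀ y ∈ Y, f i y ∈ S.X i)
    (f_def : ∀ i, DefinableFun L M Y (f i))
    (f_compat : ∀ i j (h : i ≤ j), ∀ y ∈ Y, S.v i j h (f j y) = f i y)
    (hsurj : ∀ x : ∀ i, Fin (S.n i) → M, (∀ i, x i ∈ S.X i) →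
      (∀ i j (h : i ≤ j), S.v i j h (x j) = x i) → ∃ y ∈ Y, ∀ i, f i y = x i) :
    ∀ i, ∃ j, ∃ h : i ≤ j, S.v i j h '' S.X j = f i '' Y :=
  pro_surjective_on_limit_images_agree_general L κ M hκ hM I hI S Y f f_mem f_def f_compat hsurj
end

section
/- Let L be a first-order language, κ an infinite cardinal, and M a κ-compact L-structure. Let X ⊆ (Fin n → M) and Y ⊆ (Fin m → M) be ∅-definable, I an index set of cardinality less than κ, and (R i)_{i ∈ I} a family of ∅-definable subsets of ((Fin n ⊕ Fin m) → M), each contained in the product set {z | z ∘ Sum.inl ∈ X ∧ z ∘ Sum.inr ∈ Y}, which is downward directed under inclusion (for all i, j there is k with R k ⊆ R i ∩ R j). Suppose the intersection ⋂_{i ∈ I} R i is the graph of a total function φ : X → Y, i.e. for every x ∈ X there is exactly one y ∈ Y with the corresponding tuple in ⋂_i R i. Then there exists j ∈ I such that ⋂_{i ∈ I} R i = R j ∩ {z | z ∘ Sum.inl ∈ X ∧ z ∘ Sum.inr ∈ Y}; in particular ⋂_{i ∈ I} R i is ∅-definable and φ is an ∅-definable map. -/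
open FirstOrder Cardinal

/-! Suppose no `R j` is contained in `⋂ i, R i`. The sets `S i` of triples `(x, y, y')` with
`(x, y), (x, y') ∈ R i` and `y ≠ y'` are then nonempty (take `(x, y') ∈ R i \ ⋂ R` and `y` the value
of the function at `x`), definable and downward directed, and there are fewer than `κ` of them, so by
`κ`-compactness they have a common point. It gives two values of the function at `x`. Hence
`⋂ i, R i = R j` for some `j`, which is definable and is the graph of the function. -/

open Set

theorem Set.definable_setOf_comp_eq {L : FirstOrder.Language} {M : Type*} [L.Structure M]
    {α β : Type*} [Finite β] (A : Set M) (f g : β → α) :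
    A.Definable L {v : α → M | v ∘ f = v ∘ g} := by
  have hcoord (b : β) : A.Definable L {v : α → M | v (f b) = v (g b)} :=
    (Definable.diagonal L A).preimage_comp ![f b, g b]
  simpa only [funext_iff, Function.comp_apply, ofPred_forall] using definable_iInter_of_finite hcoord

theorem KappaCompact.nonempty_iInter_of_directed_s14 {L : FirstOrder.Language.{0, 0}}
    {κ : Cardinal.{0}} {M : Type} [L.Structure M] (hM : KappaCompact L κ M)
    {α I : Type} [Nonempty I] (hI : #I < κ) {S : I → Set (α → M)}
    (hS : ∀ i, (∅ : Set M).Definable L (S i)) (hdir : Directed (· ⊇ ·) S)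
    (hne : ∀ i, (S i).Nonempty) : (⋂ i, S i).Nonempty := by
  classical
  choose θ hθ using fun i => empty_definable_iff.mp (hS i)
  obtain ⟨v, hv⟩ := hM α (range θ) (mk_range_le.trans_lt hI) fun Φ₀ hΦ₀ hfin => by
    obtain ⟨J, -, hJ⟩ := Finset.subset_set_image_iff.mp
      (show ↑hfin.toFinset ⊆ θ '' univ by simpa [image_univ] using hΦ₀)
    obtain ⟨k, hk⟩ := hdir.finset_le J
    obtain ⟨v, hv⟩ := hne k
    refine ⟨v, fun φ hφ => ?_⟩
    obtain ⟨i, hi, rfl⟩ := Finset.mem_image.mp (show φ ∈ J.image θ by simpa [hJ] using hφ)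
    exact (hθ i ▸ hk i hi hv :)
  exact ⟨v, mem_iInter.mpr fun i => (hθ i).symm ▸ hv (θ i) (mem_range_self i)⟩

theorem KappaCompact.exists_subset_iInter_of_existsUnique {L : FirstOrder.Language.{0, 0}}
    {κ : Cardinal.{0}} {M : Type} [L.Structure M] (hM : KappaCompact L κ M)
    {α β I : Type} [Finite β] [Nonempty I] (hI : #I < κ) {R : I → Set (α ⊕ β → M)}
    (hR : ∀ i, (∅ : Set M).Definable L (R i)) (hdir : Directed (· ⊇ ·) R)
    (hfun : ∀ i, ∀ z ∈ R i, ∃! y, Sum.elim (z ∘ Sum.inl) y ∈ ⋂ i, R i) :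
    ∃ j, R j ⊆ ⋂ i, R i := by
  by_contra! hcon
  -- `v ∈ S i` encodes a pair of points `(x, y), (x, y')` of `R i` with `y ≠ y'`.
  let S (i : I) : Set (α ⊕ β ⊕ β → M) :=
    {v | v ∘ Sum.map id Sum.inl ∈ R i} ∩ {v | v ∘ Sum.map id Sum.inr ∈ R i} ∩
      {v | v ∘ (Sum.inr ∘ Sum.inl) = v ∘ (Sum.inr ∘ Sum.inr)}ᶜ
  have hS (i : I) : (∅ : Set M).Definable L (S i) :=
    (((hR i).preimage_comp _).inter ((hR i).preimage_comp _)).inter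
      (definable_setOf_comp_eq _ _ _).compl
  have hSdir : Directed (· ⊇ ·) S := fun i j => by
    obtain ⟨k, hki, hkj⟩ := hdir i j
    exact ⟨k, fun v ⟨⟨h₁, h₂⟩, hne⟩ => ⟨⟨hki h₁, hki h₂⟩, hne⟩,
      fun v ⟨⟨h₁, h₂⟩, hne⟩ => ⟨⟨hkj h₁, hkj h₂⟩, hne⟩⟩
  have hSne (i : I) : (S i).Nonempty := by
    obtain ⟨z, hzi, hz⟩ := not_subset.mp (hcon i)
    obtain ⟨y, hy, -⟩ := hfun i z hzi
    have hyz : y ≠ z ∘ Sum.inr := by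
      rintro rfl
      exact hz (by rwa [Sum.elim_comp_inl_inr] at hy)
    refine ⟨Sum.elim (z ∘ Sum.inl) (Sum.elim y (z ∘ Sum.inr)), ⟨?_, ?_⟩, ?_⟩
    · simpa [Sum.elim_comp_map] using mem_iInter.mp hy i
    · simpa [Sum.elim_comp_map] using hzi
    · simpa [← Function.comp_assoc] using hyz
  obtain ⟨v, hv⟩ := hM.nonempty_iInter_of_directed_s14 hI hS hSdir hSne
  have hmem (i : I) := mem_iInter.mp hv i
  have h₁ : v ∘ Sum.map id Sum.inl ∈ ⋂ i, R i := mem_iInter.mpr fun i => (hmem i).1.1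
  have h₂ : v ∘ Sum.map id Sum.inr ∈ ⋂ i, R i := mem_iInter.mpr fun i => (hmem i).1.2
  rw [← Sum.elim_comp_inl_inr (v ∘ Sum.map id Sum.inl)] at h₁
  rw [← Sum.elim_comp_inl_inr (v ∘ Sum.map id Sum.inr)] at h₂
  obtain ⟨i⟩ := ‹Nonempty I›
  exact (hmem i).2 ((hfun i _ (mem_iInter.mp h₁ i)).unique h₁ h₂)

theorem eq_setOf_graph_of_existsUnique {M α β : Type*} {X : Set (α → M)} {Y : Set (β → M)}
    {G : Set (α ⊕ β → M)} (hG : G ⊆ {z | z ∘ Sum.inl ∈ X ∧ z ∘ Sum.inr ∈ Y})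
    (hfun : ∀ x ∈ X, ∃! y, y ∈ Y ∧ Sum.elim x y ∈ G) {φ : (α → M) → β → M}
    (hφ : ∀ x ∈ X, φ x ∈ Y ∧ Sum.elim x (φ x) ∈ G) :
    G = {z | z ∘ Sum.inl ∈ X ∧ φ (z ∘ Sum.inl) = z ∘ Sum.inr} := by
  ext z
  constructor
  · intro hz
    obtain ⟨hx, hy⟩ := hG hz
    refine ⟨hx, (hfun _ hx).unique (hφ _ hx) ⟨hy, ?_⟩⟩
    rwa [Sum.elim_comp_inl_inr]
  · rintro ⟨hx, hφz⟩
    rw [← Sum.elim_comp_inl_inr z, ← hφz]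
    exact (hφ _ hx).2

theorem directed_intersection_graph_definable_general
    (L : FirstOrder.Language.{0, 0}) (κ : Cardinal.{0}) (M : Type) [L.Structure M]
    (hM : KappaCompact L κ M)
    {n m : ℕ} (X : Set (Fin n → M))
    (Y : Set (Fin m → M))
    (I : Type) [Nonempty I] (hI : #I < κ)
    (R : I → Set (Fin n ⊕ Fin m → M))
    (hR : ∀ i, Set.Definable (∅ : Set M) L (R i))
    (hsub : ∀ i, R i ⊆ {z | z ∘ Sum.inl ∈ X ∧ z ∘ Sum.inr ∈ Y})
    (hdir : ∀ i j, ∃ k, R k ⊆ R i ∩ R j)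
    (hfun : ∀ x ∈ X, ∃! y, y ∈ Y ∧ Sum.elim x y ∈ ⋂ i, R i) :
    (∃ j, (⋂ i, R i) = R j ∩ {z | z ∘ Sum.inl ∈ X ∧ z ∘ Sum.inr ∈ Y}) ∧
      Set.Definable (∅ : Set M) L (⋂ i, R i) ∧
      ∀ φ : (Fin n → M) → (Fin m → M),
        (∀ x ∈ X, φ x ∈ Y ∧ Sum.elim x (φ x) ∈ ⋂ i, R i) →
        DefinableFun L M X φ := by
  have hproj : ⋂ i, R i ⊆ {z | z ∘ Sum.inl ∈ X ∧ z ∘ Sum.inr ∈ Y} :=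
    (iInter_subset R (Classical.arbitrary I)).trans (hsub _)
  obtain ⟨j, hRj⟩ := hM.exists_subset_iInter_of_existsUnique hI hR
    (fun i j => (hdir i j).imp fun _ => subset_inter_iff.mp) fun i z hz => by
      obtain ⟨y, ⟨-, hy⟩, huniq⟩ := hfun _ (hsub i hz).1
      exact ⟨y, hy, fun y' hy' => huniq y' ⟨(hproj hy').2, hy'⟩⟩
  have hj : ⋂ i, R i = R j := (iInter_subset R j).antisymm hRj
  refine ⟨⟨j, by rw [hj, inter_eq_left.mpr (hsub j)]⟩, hj ▸ hR j, fun φ hφ => ?_⟩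
  show (∅ : Set M).Definable L _
  rw [← eq_setOf_graph_of_existsUnique hproj hfun hφ, hj]
  exact hR j

theorem directed_intersection_graph_definable
    (L : FirstOrder.Language.{0, 0}) (κ : Cardinal.{0}) (M : Type) [L.Structure M]
    (hκ : ℵ₀ ≤ κ) (hM : KappaCompact L κ M)
    {n m : ℕ} (X : Set (Fin n → M)) (hX : Set.Definable (∅ : Set M) L X)
    (Y : Set (Fin m → M)) (hY : Set.Definable (∅ : Set M) L Y)
    (I : Type) [Nonempty I] (hI : #I < κ)
    (R : I → Set (Fin n ⊕ Fin m → M))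
    (hR : ∀ i, Set.Definable (∅ : Set M) L (R i))
    (hsub : ∀ i, R i ⊆ {z | z ∘ Sum.inl ∈ X ∧ z ∘ Sum.inr ∈ Y})
    (hdir : ∀ i j, ∃ k, R k ⊆ R i ∩ R j)
    (hfun : ∀ x ∈ X, ∃! y, y ∈ Y ∧ Sum.elim x y ∈ ⋂ i, R i) :
    (∃ j, (⋂ i, R i) = R j ∩ {z | z ∘ Sum.inl ∈ X ∧ z ∘ Sum.inr ∈ Y}) ∧
      Set.Definable (∅ : Set M) L (⋂ i, R i) ∧
      ∀ φ : (Fin n → M) → (Fin m → M),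
        (∀ x ∈ X, φ x ∈ Y ∧ Sum.elim x (φ x) ∈ ⋂ i, R i) →
        DefinableFun L M X φ :=
  directed_intersection_graph_definable_general L κ M hM X Y I hI R hR hsub hdir hfun
end

section
/- Let L be a first-order language, κ an infinite cardinal, and M a κ-compact L-structure. Let X ⊆ (Fin n → M) and Y ⊆ (Fin m → M) be ∅-definable, I an index set of cardinality less than κ, and (R i)_{i ∈ I} a family of ∅-definable subsets of ((Fin n ⊕ Fin m) → M) that is directed under inclusion (for all i, j there is k with R i ∪ R j ⊆ R k). Suppose the union ⋃_{i ∈ I} R i is the graph of a total function φ : X → Y, i.e. ⋃_i R i ⊆ {z | z ∘ Sum.inl ∈ X ∧ z ∘ Sum.inr ∈ Y} and for every x ∈ X there is exactly one y ∈ Y with the corresponding tuple in ⋃_i R i. Then there exists j ∈ I with ⋃_{i ∈ I} R i = R j; in particular the graph of φ is ∅-definable and φ is an ∅-definable map. -/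
open FirstOrder Cardinal

/-!
By κ-compactness, a directed cover of a ∅-definable set `X` by fewer than κ ∅-definable sets
`P i` has a single member covering `X`: otherwise the formulas `x ∈ X ∧ x ∉ P i` are finitely
realized (finitely many `P i` lie in one `P k`, which misses a point of `X`), and a common
realization is a point of `X` outside every `P i`. Applied to the projections of the `R i`,
this yields `j` with every `x ∈ X` having a partner in `R j`; as partners are unique, `R j` is
already the whole union, and the graph of `φ` is `{z | z ∘ Sum.inl ∈ X} ∩ R j`.
-/

namespace KappaCompact

variable {L : FirstOrder.Language.{0, 0}} {κ : Cardinal.{0}} {M : Type} [L.Structure M]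

theorem exists_forall_realize (hM : KappaCompact L κ M) {α I : Type} (θ : I → L.Formula α)
    (hI : #I < κ) (hfin : ∀ s : Finset I, ∃ v : α → M, ∀ i ∈ s, (θ i).Realize v) :
    ∃ v : α → M, ∀ i, (θ i).Realize v := by
  classical
  obtain ⟨v, hv⟩ := hM α (Set.range θ) (mk_range_le.trans_lt hI) fun Φ₀ hΦ₀ hfinΦ₀ => by
    rw [← Set.image_univ, ← hfinΦ₀.coe_toFinset, Finset.subset_set_image_iff] at hΦ₀
    obtain ⟨s, -, hs⟩ := hΦ₀
    obtain ⟨v, hv⟩ := hfin s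
    refine ⟨v, fun φ hφ => ?_⟩
    rw [← hfinΦ₀.mem_toFinset, ← hs, Finset.mem_image] at hφ
    obtain ⟨i, hi, rfl⟩ := hφ
    exact hv i hi
  exact ⟨v, fun i => hv _ ⟨i, rfl⟩⟩

theorem exists_subset_of_subset_iUnion (hM : KappaCompact L κ M) {α I : Type} [Nonempty I]
    {X : Set (α → M)} (hX : (∅ : Set M).Definable L X) {P : I → Set (α → M)}
    (hP : ∀ i, (∅ : Set M).Definable L (P i)) (hdir : Directed (· ⊆ ·) P) (hI : #I < κ)
    (hcover : X ⊆ ⋃ i, P i) : ∃ i, X ⊆ P i := by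
  by_contra! hnot
  obtain ⟨φX, rfl⟩ := Set.empty_definable_iff.mp hX
  choose ψ hψ using fun i => Set.empty_definable_iff.mp (hP i)
  obtain ⟨v, hv⟩ := hM.exists_forall_realize (fun i => φX ⊓ (ψ i).not) hI fun s => by
    obtain ⟨k, hk⟩ := hdir.finset_le s
    obtain ⟨x, hxX, hxk⟩ := Set.not_subset.mp (hnot k)
    refine ⟨x, fun i hi => Language.Formula.realize_inf.mpr ⟨hxX, fun hxi => hxk (hk i hi ?_)⟩⟩
    rw [hψ]
    exact hxi
  simp only [Language.Formula.realize_inf, Language.Formula.realize_not] at hv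
  obtain ⟨i, hvi⟩ := Set.mem_iUnion.mp (hcover (hv (Classical.arbitrary I)).1)
  rw [hψ] at hvi
  exact (hv i).2 hvi

end KappaCompact

section Graph

variable {α β M : Type*} {X : Set (α → M)} {Y : Set (β → M)} {G : Set (α ⊕ β → M)}

theorem comp_inr_eq_of_existsUnique (hsub : G ⊆ {z | z ∘ Sum.inl ∈ X ∧ z ∘ Sum.inr ∈ Y})
    (hfun : ∀ x ∈ X, ∃! y, y ∈ Y ∧ Sum.elim x y ∈ G) {z : α ⊕ β → M} (hz : z ∈ G)
    {y : β → M} (hy : Sum.elim (z ∘ Sum.inl) y ∈ G) : z ∘ Sum.inr = y :=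
  (hfun _ (hsub hz).1).unique ⟨(hsub hz).2, by rwa [Sum.elim_comp_inl_inr]⟩
    ⟨by simpa using (hsub hy).2, hy⟩

theorem eq_of_subset_of_subset_image_comp_inl
    (hsub : G ⊆ {z | z ∘ Sum.inl ∈ X ∧ z ∘ Sum.inr ∈ Y})
    (hfun : ∀ x ∈ X, ∃! y, y ∈ Y ∧ Sum.elim x y ∈ G) {S : Set (α ⊕ β → M)} (hS : S ⊆ G)
    (hX : X ⊆ (· ∘ Sum.inl) '' S) : G = S := by
  refine Set.Subset.antisymm (fun z hz => ?_) hS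
  obtain ⟨w, hwS, hw⟩ := hX (hsub hz).1
  replace hw : w ∘ Sum.inl = z ∘ Sum.inl := hw
  have hzw : z ∘ Sum.inr = w ∘ Sum.inr :=
    comp_inr_eq_of_existsUnique hsub hfun hz (by rw [← hw, Sum.elim_comp_inl_inr]; exact hS hwS)
  rwa [← Sum.elim_comp_inl_inr z, ← hw, hzw, Sum.elim_comp_inl_inr]

theorem setOf_graph_eq (hsub : G ⊆ {z | z ∘ Sum.inl ∈ X ∧ z ∘ Sum.inr ∈ Y})
    (hfun : ∀ x ∈ X, ∃! y, y ∈ Y ∧ Sum.elim x y ∈ G) {φ : (α → M) → β → M}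
    (hφ : ∀ x ∈ X, φ x ∈ Y ∧ Sum.elim x (φ x) ∈ G) :
    {z : α ⊕ β → M | z ∘ Sum.inl ∈ X ∧ φ (z ∘ Sum.inl) = z ∘ Sum.inr} =
      (· ∘ Sum.inl) ⁻¹' X ∩ G := by
  ext z
  refine ⟨fun ⟨hzX, hzφ⟩ => ⟨hzX, ?_⟩, fun ⟨hzX, hzG⟩ => ⟨hzX, ?_⟩⟩
  · rw [← Sum.elim_comp_inl_inr z, ← hzφ]
    exact (hφ _ hzX).2
  · exact (comp_inr_eq_of_existsUnique hsub hfun hzG (hφ _ hzX).2).symm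

end Graph

theorem directed_union_graph_definable_general
    (L : FirstOrder.Language.{0, 0}) (κ : Cardinal.{0}) (M : Type) [L.Structure M]
    (hM : KappaCompact L κ M)
    {n m : ℕ} (X : Set (Fin n → M)) (hX : Set.Definable (∅ : Set M) L X)
    (Y : Set (Fin m → M))
    (I : Type) [Nonempty I] (hI : #I < κ)
    (R : I → Set (Fin n ⊕ Fin m → M))
    (hR : ∀ i, Set.Definable (∅ : Set M) L (R i))
    (hdir : ∀ i j, ∃ k, R i ∪ R j ⊆ R k)
    (hsub : (⋃ i, R i) ⊆ {z | z ∘ Sum.inl ∈ X ∧ z ∘ Sum.inr ∈ Y})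
    (hfun : ∀ x ∈ X, ∃! y, y ∈ Y ∧ Sum.elim x y ∈ ⋃ i, R i) :
    (∃ j, (⋃ i, R i) = R j) ∧
      Set.Definable (∅ : Set M) L (⋃ i, R i) ∧
      ∀ φ : (Fin n → M) → (Fin m → M),
        (∀ x ∈ X, φ x ∈ Y ∧ Sum.elim x (φ x) ∈ ⋃ i, R i) →
        DefinableFun L M X φ := by
  have hRdir : Directed (· ⊆ ·) R := fun i j =>
    (hdir i j).imp fun _ hk => Set.union_subset_iff.mp hk
  have hcover : X ⊆ ⋃ i, (· ∘ Sum.inl) '' R i := fun x hx => by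
    obtain ⟨y, ⟨-, hy⟩, -⟩ := hfun x hx
    obtain ⟨i, hi⟩ := Set.mem_iUnion.mp hy
    exact Set.mem_iUnion.mpr ⟨i, _, hi, Sum.elim_comp_inl x y⟩
  have hPdir : Directed (· ⊆ ·) fun i => (· ∘ Sum.inl) '' R i :=
    hRdir.mono_comp (· ⊆ ·) (g := Set.image (· ∘ Sum.inl)) fun _ _ => Set.image_mono
  obtain ⟨j, hj⟩ := hM.exists_subset_of_subset_iUnion hX (fun i => (hR i).image_comp Sum.inl)
    hPdir hI hcover
  have hUj : (⋃ i, R i) = R j :=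
    eq_of_subset_of_subset_image_comp_inl hsub hfun (Set.subset_iUnion R j) hj
  refine ⟨⟨j, hUj⟩, hUj ▸ hR j, fun φ hφ => ?_⟩
  rw [DefinableFun, setOf_graph_eq hsub hfun hφ]
  exact (hX.preimage_comp Sum.inl).inter (hUj ▸ hR j)

theorem directed_union_graph_definable
    (L : FirstOrder.Language.{0, 0}) (κ : Cardinal.{0}) (M : Type) [L.Structure M]
    (hκ : ℵ₀ ≤ κ) (hM : KappaCompact L κ M)
    {n m : ℕ} (X : Set (Fin n → M)) (hX : Set.Definable (∅ : Set M) L X)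
    (Y : Set (Fin m → M)) (hY : Set.Definable (∅ : Set M) L Y)
    (I : Type) [Nonempty I] (hI : #I < κ)
    (R : I → Set (Fin n ⊕ Fin m → M))
    (hR : ∀ i, Set.Definable (∅ : Set M) L (R i))
    (hdir : ∀ i j, ∃ k, R i ∪ R j ⊆ R k)
    (hsub : (⋃ i, R i) ⊆ {z | z ∘ Sum.inl ∈ X ∧ z ∘ Sum.inr ∈ Y})
    (hfun : ∀ x ∈ X, ∃! y, y ∈ Y ∧ Sum.elim x y ∈ ⋃ i, R i) :
    (∃ j, (⋃ i, R i) = R j) ∧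
      Set.Definable (∅ : Set M) L (⋃ i, R i) ∧
      ∀ φ : (Fin n → M) → (Fin m → M),
        (∀ x ∈ X, φ x ∈ Y ∧ Sum.elim x (φ x) ∈ ⋃ i, R i) →
        DefinableFun L M X φ :=
  directed_union_graph_definable_general L κ M hM X hX Y I hI R hR hdir hsub hfun
end
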